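/- In the RandChore mechanism, for any coalition the total expected utility is maximized by truthful reporting: for every set S ⊆ N of agents with true valuations v_S, every fixed reported valuations v̂_{-S} of the other agents, and every reported valuations v̂_S of the agents in S, the sum over i ∈ S of agent i's expected true utility under RandChore(v_S, v̂_{-S}) is at least the sum over i ∈ S of agent i's expected true utility under RandChore(v̂_S, v̂_{-S}). -/

import Mathlib

open Finset

attribute [local instance] Classical.propDecidable

noncomputable section

/-- The bundle of agent `i` under deterministic allocation `A`. -/
def bundle {m n : ℕ} (A : Fin m → Fin n) (i : Fin n) : Finset (Fin m) :=
  Finset.univ.filter fun j => A j = i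

/-- Additive value of a bundle. -/
def sval {m : ℕ} (f : Fin m → ℝ) (S : Finset (Fin m)) : ℝ := ∑ j ∈ S, f j

/-- The set `Q` of (indices of) items on which some agent reports value zero. -/
def chQ {n m : ℕ} (r : Fin n → Fin m → ℝ) : Finset (Fin m) :=
  Finset.univ.filter fun q => ∃ i, r i q = 0

/-- The set of agents reporting value zero on item `q`. -/
def chZ {n m : ℕ} (r : Fin n → Fin m → ℝ) (q : Fin m) : Finset (Fin n) :=
  Finset.univ.filter fun i => r i q = 0

/-- The position of item `q ∈ Q̄` in the list of the items of `Q̄` sorted in nonincreasing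
order of inherent value `w`, ties broken by smallest index. -/
def chRank {n m : ℕ} (w : Fin m → ℝ) (r : Fin n → Fin m → ℝ) (q : Fin m) : ℕ :=
  (((chQ r)ᶜ).filter fun q' => w q' > w q ∨ (w q' = w q ∧ q' < q)).card

/-- The probability that mechanism `RandChore`, on reported profile `r` (inherent values `w`),
outputs the deterministic allocation `A`: each item of `Q` goes independently and uniformly to
an agent reporting zero on it, and the items of `Q̄` are allocated round-robin (in nonincreasing
inherent value, ties by index) according to a uniformly random permutation of the agents. -/
def randChoreProb {n m : ℕ} (hn : 0 < n) (w : Fin m → ℝ) (r : Fin n → Fin m → ℝ)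
    (A : Fin m → Fin n) : ℝ :=
  ((∑ σ : Equiv.Perm (Fin n),
      if ∀ q ∈ (chQ r)ᶜ, A q = σ ⟨chRank w r q % n, Nat.mod_lt _ hn⟩ then (1 : ℝ) else 0)
    / (Fintype.card (Equiv.Perm (Fin n)) : ℝ))
  * ∏ q ∈ chQ r, (if r (A q) q = 0 then (1 : ℝ) / ((chZ r q).card : ℝ) else 0)

/-- The expected utility, under `RandChore` on reported profile `r`, of agent `i` whose true
additive valuation is `vi`. -/
def randChoreExp {n m : ℕ} (hn : 0 < n) (w : Fin m → ℝ) (r : Fin n → Fin m → ℝ)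
    (vi : Fin m → ℝ) (i : Fin n) : ℝ :=
  ∑ A : Fin m → Fin n, randChoreProb hn w r A * sval vi (bundle A i)

/-!
By linearity of expectation an agent's expected utility is `∑ j, v i j * p j i`, where `p j i`,
the probability that item `j` goes to agent `i`, is `1 / #Z_j` for the agents `Z_j` reporting zero
on `j` when `j ∈ Q`, and `1 / n` otherwise (under a uniform permutation every agent is equally
likely to occupy any round-robin position). The coalition's utility therefore splits item by item.
If under truthful reports some member values `j` at zero or some outsider reports zero on it, no
member of `S` with a nonzero value can receive `j`, so `S` loses nothing on `j`. Otherwise every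
member values `j` at `w j < 0` and every outsider reports nonzero on it; truthfully `S` receives
`j` with probability `#S / n`, while under any report each outsider receives it with probability
at most `1 / n`, so `S` receives it with probability at least `#S / n`.
-/

lemma Fintype.sum_prod_mul_apply {ι α R : Type*} [Fintype ι] [DecidableEq ι] [Fintype α]
    [CommSemiring R] (f : ι → α → R) (hf : ∀ q, ∑ a, f q a = 1) (j : ι) (g : α → R) :
    ∑ A : ι → α, (∏ q, f q (A q)) * g (A j) = ∑ a, f j a * g a := by
  have hsplit : ∀ A : ι → α, (∏ q, f q (A q)) * g (A j)
      = ∏ q, f q (A q) * (if q = j then g (A q) else 1) := by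
    intro A
    rw [prod_mul_distrib, Fintype.prod_ite_eq']
  simp_rw [hsplit]
  rw [← Fintype.prod_sum (κ := fun _ => α) fun q a => f q a * if q = j then g a else 1]
  rw [Fintype.prod_eq_single j fun q hq => by simp only [if_neg hq, mul_one, hf]]
  simp only [if_true]

lemma Equiv.Perm.sum_ite_apply_eq {α : Type*} [Fintype α] [DecidableEq α] (k i : α) :
    ∑ σ : Equiv.Perm α, (if σ k = i then (1 : ℝ) else 0)
      = (Fintype.card (Equiv.Perm α) : ℝ) / Fintype.card α := by
  let c : α → ℝ := fun i => ∑ σ : Equiv.Perm α, if σ k = i then 1 else 0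
  have hc : ∀ i i', c i = c i' := by
    intro i i'
    simp only [c]
    conv_rhs => rw [← Equiv.sum_comp (Equiv.mulLeft (Equiv.swap i i'))]
    simp [Equiv.swap_apply_eq_iff]
  have htotal : ∑ i, c i = Fintype.card (Equiv.Perm α) := by
    simp only [c]
    rw [Finset.sum_comm]
    simp
  rw [eq_div_iff (by exact_mod_cast (Fintype.card_pos_iff.mpr ⟨k⟩).ne'), ← htotal,
    Fintype.sum_congr _ _ fun i' => hc i' i, Finset.sum_const, card_univ, nsmul_eq_mul, mul_comm]

section RandChore

variable {n m : ℕ}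

def roundRobinAgent (hn : 0 < n) (w : Fin m → ℝ) (r : Fin n → Fin m → ℝ)
    (σ : Equiv.Perm (Fin n)) (q : Fin m) : Fin n :=
  σ ⟨chRank w r q % n, Nat.mod_lt _ hn⟩

def zeroShare (r : Fin n → Fin m → ℝ) (q : Fin m) (a : Fin n) : ℝ :=
  if r a q = 0 then 1 / ((chZ r q).card : ℝ) else 0

/-- The law of the recipient of item `q` once the round-robin permutation `σ` is drawn. -/
def itemDist (hn : 0 < n) (w : Fin m → ℝ) (r : Fin n → Fin m → ℝ)
    (σ : Equiv.Perm (Fin n)) (q : Fin m) (a : Fin n) : ℝ :=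
  if q ∈ chQ r then zeroShare r q a else if a = roundRobinAgent hn w r σ q then 1 else 0

def itemProb (r : Fin n → Fin m → ℝ) (j : Fin m) (i : Fin n) : ℝ :=
  if j ∈ chQ r then zeroShare r j i else 1 / (n : ℝ)

lemma chZ_nonempty {r : Fin n → Fin m → ℝ} {q : Fin m} (hq : q ∈ chQ r) :
    (chZ r q).Nonempty := by
  obtain ⟨a, ha⟩ := (mem_filter.mp hq).2
  exact ⟨a, mem_filter.mpr ⟨mem_univ a, ha⟩⟩

lemma sum_zeroShare {r : Fin n → Fin m → ℝ} {q : Fin m} (hq : q ∈ chQ r) :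
    ∑ a, zeroShare r q a = 1 := by
  have hZ : ((chZ r q).card : ℝ) ≠ 0 := by exact_mod_cast (chZ_nonempty hq).card_pos.ne'
  unfold zeroShare
  rw [← sum_filter, sum_const, nsmul_eq_mul]
  exact mul_one_div_cancel hZ

lemma sum_itemDist (hn : 0 < n) (w : Fin m → ℝ) (r : Fin n → Fin m → ℝ)
    (σ : Equiv.Perm (Fin n)) (q : Fin m) : ∑ a, itemDist hn w r σ q a = 1 := by
  by_cases hq : q ∈ chQ r
  · simp only [itemDist, if_pos hq, sum_zeroShare hq]
  · simp [itemDist, if_neg hq]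

lemma randChoreProb_eq_sum_prod_itemDist (hn : 0 < n) (w : Fin m → ℝ)
    (r : Fin n → Fin m → ℝ) (A : Fin m → Fin n) :
    randChoreProb hn w r A
      = (∑ σ, ∏ q, itemDist hn w r σ q (A q)) / (Fintype.card (Equiv.Perm (Fin n)) : ℝ) := by
  have hprod : ∀ σ, ∏ q, itemDist hn w r σ q (A q)
      = (if ∀ q ∈ (chQ r)ᶜ, A q = roundRobinAgent hn w r σ q then 1 else 0)
        * ∏ q ∈ chQ r, zeroShare r q (A q) := by
    intro σ
    rw [← prod_mul_prod_compl (chQ r), mul_comm]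
    congr 1
    · calc ∏ q ∈ (chQ r)ᶜ, itemDist hn w r σ q (A q)
          = ∏ q ∈ (chQ r)ᶜ, if A q = roundRobinAgent hn w r σ q then (1 : ℝ) else 0 :=
            prod_congr rfl fun q hq => if_neg (mem_compl.mp hq)
        _ = _ := by rw [prod_boole]; congr
    · exact prod_congr rfl fun q hq => if_pos hq
  rw [Fintype.sum_congr _ _ hprod, ← sum_mul, randChoreProb, div_mul_eq_mul_div]
  rfl

lemma sum_itemDist_div_card (hn : 0 < n) (w : Fin m → ℝ) (r : Fin n → Fin m → ℝ)
    (j : Fin m) (a : Fin n) :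
    (∑ σ, itemDist hn w r σ j a) / (Fintype.card (Equiv.Perm (Fin n)) : ℝ) = itemProb r j a := by
  by_cases hj : j ∈ chQ r
  · simp [itemDist, itemProb, hj]
  · simp only [itemDist, itemProb, roundRobinAgent, if_neg hj, eq_comm (a := a),
      Equiv.Perm.sum_ite_apply_eq, Fintype.card_fin]
    field_simp

lemma sum_randChoreProb_mul_apply (hn : 0 < n) (w : Fin m → ℝ) (r : Fin n → Fin m → ℝ)
    (j : Fin m) (g : Fin n → ℝ) :
    ∑ A, randChoreProb hn w r A * g (A j) = ∑ a, itemProb r j a * g a := by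
  simp_rw [randChoreProb_eq_sum_prod_itemDist, div_mul_eq_mul_div, ← sum_div, sum_mul]
  rw [sum_comm]
  simp_rw [Fintype.sum_prod_mul_apply _ (sum_itemDist hn w r _) j g, ← sum_itemDist_div_card hn w,
    div_mul_eq_mul_div, ← sum_div, sum_mul]
  rw [sum_comm]

lemma randChoreExp_eq_sum_mul_itemProb (hn : 0 < n) (w : Fin m → ℝ) (r : Fin n → Fin m → ℝ)
    (vi : Fin m → ℝ) (i : Fin n) :
    randChoreExp hn w r vi i = ∑ j, vi j * itemProb r j i := by
  have hbundle : ∀ A : Fin m → Fin n,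
      sval vi (bundle A i) = ∑ j, vi j * (if A j = i then 1 else 0) := by
    intro A
    simp [sval, bundle, sum_filter]
  simp_rw [randChoreExp, hbundle, mul_sum]
  rw [sum_comm]
  refine sum_congr rfl fun j _ => ?_
  simp_rw [mul_left_comm _ (vi j), ← mul_sum, sum_randChoreProb_mul_apply hn w r j fun a =>
    if a = i then 1 else 0]
  simp

lemma itemProb_nonneg (r : Fin n → Fin m → ℝ) (j : Fin m) (i : Fin n) : 0 ≤ itemProb r j i := by
  unfold itemProb zeroShare
  split_ifs <;> positivity

lemma sum_itemProb (hn : 0 < n) (r : Fin n → Fin m → ℝ) (j : Fin m) :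
    ∑ i, itemProb r j i = 1 := by
  by_cases hj : j ∈ chQ r
  · simp only [itemProb, if_pos hj, sum_zeroShare hj]
  · simp [itemProb, if_neg hj, hn.ne']

lemma itemProb_eq_zero {r : Fin n → Fin m → ℝ} {j : Fin m} {i : Fin n} (hj : j ∈ chQ r)
    (hi : r i j ≠ 0) : itemProb r j i = 0 := by
  simp [itemProb, zeroShare, hj, hi]

lemma itemProb_le {r : Fin n → Fin m → ℝ} {j : Fin m} {i : Fin n} (hi : r i j ≠ 0) :
    itemProb r j i ≤ 1 / n := by
  by_cases hj : j ∈ chQ r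
  · rw [itemProb_eq_zero hj hi]
    positivity
  · simp [itemProb, hj]

lemma card_div_le_sum_itemProb (hn : 0 < n) {r : Fin n → Fin m → ℝ} {j : Fin m}
    {S : Finset (Fin n)} (hS : ∀ i ∉ S, r i j ≠ 0) :
    (#S : ℝ) / n ≤ ∑ i ∈ S, itemProb r j i := by
  have hout : ∑ i ∈ Sᶜ, itemProb r j i ≤ #Sᶜ / n := by
    simpa [div_eq_mul_inv] using sum_le_sum fun i hi => itemProb_le (hS i (mem_compl.mp hi))
  have hcard : (#S : ℝ) + #Sᶜ = n := by exact_mod_cast (card_add_card_compl S).trans (card_fin n)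
  have hS_div : (#S : ℝ) / n = 1 - #Sᶜ / n := by
    field_simp
    linarith
  linarith [sum_add_sum_compl S (itemProb r j), sum_itemProb hn r j]

lemma sum_mul_itemProb_le_of_truthful (hn : 0 < n) {r r' : Fin n → Fin m → ℝ}
    {v : Fin n → Fin m → ℝ} {S : Finset (Fin n)} {j : Fin m} {c : ℝ} (hc : c ≤ 0)
    (hv : ∀ i ∈ S, v i j = 0 ∨ v i j = c) (htruth : ∀ i ∈ S, r' i j = v i j)
    (hother : ∀ i ∉ S, r' i j = r i j) :
    ∑ i ∈ S, v i j * itemProb r j i ≤ ∑ i ∈ S, v i j * itemProb r' j i := by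
  by_cases hj : j ∈ chQ r'
  · have hv_nonpos : ∀ i ∈ S, v i j ≤ 0 := fun i hi => by
      rcases hv i hi with h | h <;> rw [h]
      exact hc
    have htruthful : ∑ i ∈ S, v i j * itemProb r' j i = 0 := by
      refine sum_eq_zero fun i hi => ?_
      rcases eq_or_ne (v i j) 0 with h0 | hne
      · rw [h0, zero_mul]
      · rw [itemProb_eq_zero hj (htruth i hi ▸ hne), mul_zero]
    rw [htruthful]
    exact sum_nonpos fun i hi =>
      mul_nonpos_of_nonpos_of_nonneg (hv_nonpos i hi) (itemProb_nonneg ..)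
  · have hnz : ∀ i, r' i j ≠ 0 := fun i h => hj (mem_filter.mpr ⟨mem_univ j, i, h⟩)
    have hvc : ∀ i ∈ S, v i j = c := fun i hi => (hv i hi).resolve_left (htruth i hi ▸ hnz i)
    have hout : ∀ i ∉ S, r i j ≠ 0 := fun i hi => hother i hi ▸ hnz i
    calc ∑ i ∈ S, v i j * itemProb r j i = c * ∑ i ∈ S, itemProb r j i := by
          rw [mul_sum]; exact sum_congr rfl fun i hi => by rw [hvc i hi]
      _ ≤ c * (#S / n) := mul_le_mul_of_nonpos_left (card_div_le_sum_itemProb hn hout) hc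
      _ = ∑ i ∈ S, v i j * itemProb r' j i := by
          rw [sum_congr rfl fun i hi => by rw [hvc i hi, itemProb, if_neg hj], sum_const,
            nsmul_eq_mul]
          ring

end RandChore

theorem randChore_coalition_truthful_maximizes_sum_general (n m : ℕ) (hn : 0 < n)
    (w : Fin m → ℝ) (hw : ∀ j, w j < 0)
    (v : Fin n → Fin m → ℝ) (hv : ∀ i j, v i j = 0 ∨ v i j = w j)
    (S : Finset (Fin n))
    (r : Fin n → Fin m → ℝ) :
    ∑ i ∈ S, randChoreExp hn w (fun i' => if i' ∈ S then v i' else r i') (v i) i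
      ≥ ∑ i ∈ S, randChoreExp hn w r (v i) i := by
  simp only [randChoreExp_eq_sum_mul_itemProb]
  rw [sum_comm, sum_comm (s := S) (t := univ)]
  exact sum_le_sum fun j _ => sum_mul_itemProb_le_of_truthful hn (hw j).le
    (fun i _ => hv i j) (fun i hi => by simp [hi]) (fun i hi => by simp [hi])

/-- in `RandChore`, for any coalition `S` the total expected utility of `S` is
maximized when every member of `S` reports truthfully (the reports of the other agents,
given by `r` outside `S`, being fixed). -/
theorem randChore_coalition_truthful_maximizes_sum (n m : ℕ) (hn : 0 < n)
    (w : Fin m → ℝ) (hw : ∀ j, w j < 0)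
    (v : Fin n → Fin m → ℝ) (hv : ∀ i j, v i j = 0 ∨ v i j = w j)
    (S : Finset (Fin n))
    (r : Fin n → Fin m → ℝ) (hr : ∀ i j, r i j = 0 ∨ r i j = w j) :
    ∑ i ∈ S, randChoreExp hn w (fun i' => if i' ∈ S then v i' else r i') (v i) i
      ≥ ∑ i ∈ S, randChoreExp hn w r (v i) i :=
  randChore_coalition_truthful_maximizes_sum_general n m hn w hw v hv S r
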